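/- arXiv:2310.06978 — 2 statements merged into one kernel-verified Lean document; each statement's English description precedes it below -/
import Mathlib

section
/- Let C₁ and C₂ be Cantor sets in [0,1] with ratios λ₁ and λ₂ respectively, such that (λ₁/(1−2λ₁))·(λ₂/(1−2λ₂)) ≥ 1. Then the difference set C₂ − C₁ = {c₂ − c₁ : c₁ ∈ C₁, c₂ ∈ C₂} equals the interval [−1, 1]. -/
open Set

/-- `C` is a Cantor set of ratio `λ`: the nonempty compact subset of `[0,1]` that is
self-similar with respect to `x ↦ λx` and `x ↦ λx + (1-λ)`. -/
def IsCantorSet (l : ℝ) (C : Set ℝ) : Prop :=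
  C.Nonempty ∧ IsCompact C ∧ C ⊆ Icc 0 1 ∧
    C = (fun x => l * x) '' C ∪ (fun x => l * x + (1 - l)) '' C

namespace CantorDiff

lemma mapL {l : ℝ} {C : Set ℝ} (h : IsCantorSet l C) {x : ℝ} (hx : x ∈ C) : l * x ∈ C := by
  rw [h.2.2.2]; exact Or.inl ⟨x, hx, rfl⟩

lemma mapR {l : ℝ} {C : Set ℝ} (h : IsCantorSet l C) {x : ℝ} (hx : x ∈ C) :
    l * x + (1 - l) ∈ C := by
  rw [h.2.2.2]; exact Or.inr ⟨x, hx, rfl⟩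

lemma zero_mem {l : ℝ} {C : Set ℝ} (hl1 : l < 1) (h : IsCantorSet l C) :
    (0:ℝ) ∈ C := by
  have hm : sInf C ∈ C := h.2.1.sInf_mem h.1
  have h1 : sInf C ≤ l * sInf C := csInf_le h.2.1.bddBelow (mapL h hm)
  have h2 : 0 ≤ sInf C := (h.2.2.1 hm).1
  have h3 : sInf C = 0 := by nlinarith
  rwa [← h3]

def CInv (l₁ l₂ a p b q : ℝ) : Prop :=
  b ≤ a + p ∧ a ≤ b + q ∧
    ¬(a + l₁*p < b ∧ b + q < a + (1-l₁)*p) ∧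
    ¬(b + l₂*q < a ∧ a + p < b + (1-l₂)*q) ∧
    l₁*q ≤ p ∧ l₂*p ≤ q

variable {l₁ l₂ : ℝ}

lemma LL' (hl₁0 : 0 < l₁) (hl₁2 : l₁ < 1/2) (hl₂0 : 0 < l₂)
    (K : (1-2*l₁)*(1-2*l₂) ≤ l₁*l₂) : l₁*(1-2*l₁) ≤ l₂ := by
  have h23 : 0 < 2 - 3*l₁ := by linarith
  have hK' : 1 - 2*l₁ ≤ l₂*(2-3*l₁) := by nlinarith [K]
  have h2 : l₁*(2-3*l₁) ≤ 1 := by nlinarith [sq_nonneg (1 - l₁), sq_nonneg l₁]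
  nlinarith [mul_le_mul_of_nonneg_left hK' hl₁0.le, mul_le_mul_of_nonneg_left h2 hl₂0.le]

lemma core {a p b q : ℝ}
    (hl₁0 : 0 < l₁) (hl₁2 : l₁ < 1/2) (hl₂0 : 0 < l₂) (hl₂2 : l₂ < 1/2)
    (K : (1-2*l₁)*(1-2*l₂) ≤ l₁*l₂)
    (hp : 0 < p) (hq : 0 < q) (hqp : q ≤ p)
    (hI : CInv l₁ l₂ a p b q) :
    ∃ a', (a' = a ∨ a' = a + (1-l₁)*p) ∧ CInv l₁ l₂ a' (l₁*p) b q := by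
  obtain ⟨i1, i2, i3, i4, i5, i6⟩ := hI
  have hLL : l₁*(1-2*l₁) ≤ l₂ := LL' hl₁0 hl₁2 hl₂0 K
  have i5' : l₁*q ≤ l₁*p := by nlinarith
  have i6' : l₂*(l₁*p) ≤ q := by nlinarith
  have i3' : ∀ a' : ℝ, ¬(a' + l₁*(l₁*p) < b ∧ b + q < a' + (1-l₁)*(l₁*p)) := by
    rintro a' ⟨h1, h2⟩
    nlinarith [mul_le_mul_of_nonneg_right hLL hp.le]
  by_cases hA : b ≤ a + l₁*p
  · by_cases h4 : b + l₂*q < a ∧ a + l₁*p < b + (1-l₂)*q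
    · obtain ⟨h41, h42⟩ := h4
      have dagger : b + (1-l₂)*q ≤ a + p := by
        by_contra hcon
        exact i4 ⟨h41, by linarith⟩
      have ddag : l₁*p < (1-2*l₂)*q := by linarith
      have star : (1-2*l₁)*p ≤ l₂*q := by
        have e1 : (1-2*l₁)*(l₁*p) ≤ (1-2*l₁)*((1-2*l₂)*q) :=
          mul_le_mul_of_nonneg_left ddag.le (by linarith)
        have e2 : ((1-2*l₁)*(1-2*l₂))*q ≤ (l₁*l₂)*q := mul_le_mul_of_nonneg_right K hq.le
        have e3 : l₁*((1-2*l₁)*p) ≤ l₁*(l₂*q) := by nlinarith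
        exact le_of_mul_le_mul_left e3 hl₁0
      refine ⟨a + (1-l₁)*p, Or.inr rfl, by linarith, by linarith, i3' _, ?_, i5', i6'⟩
      rintro ⟨h51, h52⟩
      linarith
    · exact ⟨a, Or.inl rfl, hA, i2, i3' _, h4, i5', i6'⟩
  · push_neg at hA
    have hsq : a + (1-l₁)*p ≤ b + q := by
      by_contra hcon
      exact i3 ⟨hA, by linarith⟩
    refine ⟨a + (1-l₁)*p, Or.inr rfl, by linarith, hsq, i3' _, ?_, i5', i6'⟩
    rintro ⟨h41, h42⟩
    have hα : l₂*q < (1-2*l₁)*p := by linarith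
    have hβ : l₁*p < (1-2*l₂)*q := by linarith
    nlinarith [mul_lt_mul'' hα hβ (by positivity) (by positivity),
      mul_le_mul_of_nonneg_right K (mul_pos hp hq).le]

lemma exists_seq {α : Type*} (G : α → Prop) (R : α → α → Prop) (s₀ : α) (h0 : G s₀)
    (hs : ∀ s, G s → ∃ s', G s' ∧ R s s') :
    ∃ f : ℕ → α, f 0 = s₀ ∧ (∀ n, G (f n)) ∧ ∀ n, R (f n) (f (n+1)) := by
  choose next hG hR using hs
  let g : ℕ → {s : α // G s} := fun n =>
    Nat.rec ⟨s₀, h0⟩ (fun _ ih => ⟨next ih.1 ih.2, hG ih.1 ih.2⟩) n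
  exact ⟨fun n => (g n).1, rfl, fun n => (g n).2, fun n => hR _ _⟩

structure St where
  a : ℝ
  p : ℝ
  b : ℝ
  q : ℝ

def Good (l₁ l₂ t : ℝ) (C₁ C₂ : Set ℝ) (s : St) : Prop :=
  0 < s.p ∧ 0 < s.q ∧ (∀ x ∈ C₁, s.p*x + (s.a - t) ∈ C₁) ∧
    (∀ x ∈ C₂, s.q*x + s.b ∈ C₂) ∧ CInv l₁ l₂ s.a s.p s.b s.q

def Rel (l₁ l₂ : ℝ) (s s' : St) : Prop :=
  s.a ≤ s'.a ∧ s'.a + s'.p ≤ s.a + s.p ∧ s.b ≤ s'.b ∧ s'.b + s'.q ≤ s.b + s.q ∧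
    ((s.q ≤ s.p ∧ s'.p = l₁*s.p ∧ s'.q = s.q) ∨ (s.p < s.q ∧ s'.p = s.p ∧ s'.q = l₂*s.q))

lemma step {t : ℝ} {C₁ C₂ : Set ℝ}
    (hl₁0 : 0 < l₁) (hl₁2 : l₁ < 1/2) (hl₂0 : 0 < l₂) (hl₂2 : l₂ < 1/2)
    (K : (1-2*l₁)*(1-2*l₂) ≤ l₁*l₂)
    (hC₁ : IsCantorSet l₁ C₁) (hC₂ : IsCantorSet l₂ C₂) :
    ∀ s, Good l₁ l₂ t C₁ C₂ s → ∃ s', Good l₁ l₂ t C₁ C₂ s' ∧ Rel l₁ l₂ s s' := by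
  rintro ⟨a, p, b, q⟩ ⟨hp, hq, hm1, hm2, hInv⟩
  dsimp only at hp hq hm1 hm2 hInv
  rcases le_or_gt q p with hqp | hpq
  · obtain ⟨a', ha', hInv'⟩ := core hl₁0 hl₁2 hl₂0 hl₂2 K hp hq hqp hInv
    refine ⟨⟨a', l₁*p, b, q⟩, ⟨by positivity, hq, ?_, hm2, hInv'⟩, ?_⟩
    · intro x hx
      dsimp only
      rcases ha' with h | h
      · rw [h]
        have e : (l₁*p)*x + (a - t) = p*(l₁*x) + (a - t) := by ring
        rw [e]; exact hm1 _ (mapL hC₁ hx)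
      · rw [h]
        have e : (l₁*p)*x + (a + (1-l₁)*p - t) = p*(l₁*x + (1-l₁)) + (a - t) := by ring
        rw [e]; exact hm1 _ (mapR hC₁ hx)
    · refine ⟨?_, ?_, le_refl _, le_refl _, Or.inl ⟨hqp, rfl, rfl⟩⟩
      · dsimp only
        rcases ha' with h | h <;> rw [h] <;> nlinarith
      · dsimp only
        rcases ha' with h | h <;> rw [h] <;> nlinarith
  · have K' : (1-2*l₂)*(1-2*l₁) ≤ l₂*l₁ := by nlinarith [K]
    obtain ⟨i1, i2, i3, i4, i5, i6⟩ := hInv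
    obtain ⟨b', hb', hInv'⟩ :=
      core hl₂0 hl₂2 hl₁0 hl₁2 K' hq hp hpq.le ⟨i2, i1, i4, i3, i6, i5⟩
    obtain ⟨j1, j2, j3, j4, j5, j6⟩ := hInv'
    refine ⟨⟨a, p, b', l₂*q⟩, ⟨hp, by positivity, hm1, ?_, j2, j1, j4, j3, j6, j5⟩, ?_⟩
    · intro x hx
      dsimp only
      rcases hb' with h | h
      · rw [h]
        have e : (l₂*q)*x + b = q*(l₂*x) + b := by ring
        rw [e]; exact hm2 _ (mapL hC₂ hx)
      · rw [h]
        have e : (l₂*q)*x + (b + (1-l₂)*q) = q*(l₂*x + (1-l₂)) + b := by ring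
        rw [e]; exact hm2 _ (mapR hC₂ hx)
    · refine ⟨le_refl _, le_refl _, ?_, ?_, Or.inr ⟨hpq, rfl, rfl⟩⟩
      · dsimp only
        rcases hb' with h | h <;> rw [h] <;> nlinarith
      · dsimp only
        rcases hb' with h | h <;> rw [h] <;> nlinarith

lemma main {t : ℝ} {C₁ C₂ : Set ℝ}
    (hl₁0 : 0 < l₁) (hl₁2 : l₁ < 1/2) (hl₂0 : 0 < l₂) (hl₂2 : l₂ < 1/2)
    (K : (1-2*l₁)*(1-2*l₂) ≤ l₁*l₂)
    (hC₁ : IsCantorSet l₁ C₁) (hC₂ : IsCantorSet l₂ C₂)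
    (ht1 : -1 ≤ t) (ht2 : t ≤ 1) :
    ∃ c₁ ∈ C₁, ∃ c₂ ∈ C₂, t = c₂ - c₁ := by
  have h0 : Good l₁ l₂ t C₁ C₂ ⟨t, 1, 0, 1⟩ := by
    refine ⟨one_pos, one_pos, ?_, ?_, ?_, ?_, ?_, ?_, ?_, ?_⟩
    · intro x hx
      have e : (1:ℝ)*x + (t - t) = x := by ring
      dsimp only; rw [e]; exact hx
    · intro x hx
      have e : (1:ℝ)*x + (0:ℝ) = x := by ring
      dsimp only; rw [e]; exact hx
    · dsimp only; linarith
    · dsimp only; linarith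
    · dsimp only; rintro ⟨h1, h2⟩; linarith
    · dsimp only; rintro ⟨h1, h2⟩; linarith
    · dsimp only; linarith
    · dsimp only; linarith
  obtain ⟨f, hf0, hG, hR⟩ := exists_seq _ _ _ h0 (step hl₁0 hl₁2 hl₂0 hl₂2 K hC₁ hC₂)
  set Λ := max l₁ l₂ with hΛdef
  have hΛ0 : 0 < Λ := lt_max_iff.2 (Or.inl hl₁0)
  have hΛ1 : Λ < 1 := max_lt (by linarith) (by linarith)
  have hl₁Λ : l₁ ≤ Λ := le_max_left _ _
  have hl₂Λ : l₂ ≤ Λ := le_max_right _ _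
  have htwo : ∀ n, max (f (n+1+1)).p (f (n+1+1)).q ≤ Λ * max (f n).p (f n).q := by
    intro n
    obtain ⟨-, -, -, -, hd1⟩ := hR n
    obtain ⟨-, -, -, -, hd2⟩ := hR (n+1)
    have hp := (hG n).1
    have hq := (hG n).2.1
    have hPM : (f n).p ≤ max (f n).p (f n).q := le_max_left _ _
    have hQM : (f n).q ≤ max (f n).p (f n).q := le_max_right _ _
    have h1 : l₁ * (f n).p ≤ Λ * max (f n).p (f n).q := mul_le_mul hl₁Λ hPM hp.le hΛ0.le
    have h2 : l₂ * (f n).q ≤ Λ * max (f n).p (f n).q := mul_le_mul hl₂Λ hQM hq.le hΛ0.le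
    rcases hd1 with ⟨hc, e1, e2⟩ | ⟨hc, e1, e2⟩ <;>
      rcases hd2 with ⟨hc', e1', e2'⟩ | ⟨hc', e1', e2'⟩ <;>
      rw [e1, e2] at hc' <;> refine max_le ?_ ?_
    · rw [e1', e1]; nlinarith [mul_pos hl₁0 hp]
    · rw [e2', e2]; linarith
    · rw [e1', e1]; linarith
    · rw [e2', e2]; linarith
    · rw [e1', e1]; linarith
    · rw [e2', e2]; linarith
    · rw [e1', e1]; linarith
    · rw [e2', e2]; nlinarith [mul_pos hl₂0 hq]
  have hM : ∀ k, max (f (2*k)).p (f (2*k)).q ≤ Λ^k := by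
    intro k
    induction k with
    | zero => rw [Nat.mul_zero, hf0]; norm_num
    | succ k ih =>
      have h2k : 2*(k+1) = 2*k + 1 + 1 := by ring
      rw [h2k]
      calc max (f (2*k+1+1)).p (f (2*k+1+1)).q ≤ Λ * max (f (2*k)).p (f (2*k)).q := htwo _
        _ ≤ Λ * Λ^k := mul_le_mul_of_nonneg_left ih hΛ0.le
        _ = Λ^(k+1) := by ring
  set A : ℕ → Set ℝ := fun n => C₁ ∩ Icc ((f n).a - t) ((f n).a - t + (f n).p) with hAdef
  set B : ℕ → Set ℝ := fun n => C₂ ∩ Icc (f n).b ((f n).b + (f n).q) with hBdef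
  have hAne : ∀ n, (A n).Nonempty := by
    intro n
    refine ⟨(f n).a - t, ?_, le_refl _, by linarith [(hG n).1]⟩
    have := (hG n).2.2.1 0 (zero_mem (by linarith) hC₁)
    simpa using this
  have hBne : ∀ n, (B n).Nonempty := by
    intro n
    refine ⟨(f n).b, ?_, le_refl _, by linarith [(hG n).2.1]⟩
    have := (hG n).2.2.2.1 0 (zero_mem (by linarith) hC₂)
    simpa using this
  have hAsub : ∀ n, A (n+1) ⊆ A n := by
    intro n
    obtain ⟨r1, r2, -, -, -⟩ := hR n
    exact inter_subset_inter (subset_refl _) (Icc_subset_Icc (by linarith) (by linarith))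
  have hBsub : ∀ n, B (n+1) ⊆ B n := by
    intro n
    obtain ⟨-, -, r3, r4, -⟩ := hR n
    exact inter_subset_inter (subset_refl _) (Icc_subset_Icc (by linarith) (by linarith))
  have hAcl : ∀ n, IsClosed (A n) := fun n => (hC₁.2.1.isClosed).inter isClosed_Icc
  have hBcl : ∀ n, IsClosed (B n) := fun n => (hC₂.2.1.isClosed).inter isClosed_Icc
  obtain ⟨c₁, hc₁⟩ := IsCompact.nonempty_iInter_of_sequence_nonempty_isCompact_isClosed A
    hAsub hAne (hC₁.2.1.inter_right isClosed_Icc) hAcl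
  obtain ⟨c₂, hc₂⟩ := IsCompact.nonempty_iInter_of_sequence_nonempty_isCompact_isClosed B
    hBsub hBne (hC₂.2.1.inter_right isClosed_Icc) hBcl
  have hc₁n : ∀ n, c₁ ∈ A n := fun n => mem_iInter.1 hc₁ n
  have hc₂n : ∀ n, c₂ ∈ B n := fun n => mem_iInter.1 hc₂ n
  have hdist : ∀ n, |t - (c₂ - c₁)| ≤ (f n).p + (f n).q := by
    intro n
    obtain ⟨-, hi1, hi2⟩ := hc₁n n
    obtain ⟨-, hj1, hj2⟩ := hc₂n n
    have k1 := ((hG n).2.2.2.2).1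
    have k2 := ((hG n).2.2.2.2).2.1
    rw [abs_le]
    constructor <;> linarith
  have heq : t = c₂ - c₁ := by
    apply eq_of_forall_dist_le
    intro ε hε
    obtain ⟨k, hk⟩ := exists_pow_lt_of_lt_one (half_pos hε) hΛ1
    rw [Real.dist_eq]
    calc |t - (c₂ - c₁)| ≤ (f (2*k)).p + (f (2*k)).q := hdist _
      _ ≤ 2 * max (f (2*k)).p (f (2*k)).q := by
          have := le_max_left (f (2*k)).p (f (2*k)).q
          have := le_max_right (f (2*k)).p (f (2*k)).q
          linarith
      _ ≤ 2 * Λ^k := by linarith [hM k]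
      _ ≤ ε := by linarith
  exact ⟨c₁, (hc₁n 0).1, c₂, (hc₂n 0).1, heq⟩

end CantorDiff

theorem stmt_2 (l₁ l₂ : ℝ) (hl₁ : l₁ ∈ Ioo (0 : ℝ) (1 / 2)) (hl₂ : l₂ ∈ Ioo (0 : ℝ) (1 / 2))
    (h : 1 ≤ (l₁ / (1 - 2 * l₁)) * (l₂ / (1 - 2 * l₂)))
    (C₁ C₂ : Set ℝ) (hC₁ : IsCantorSet l₁ C₁) (hC₂ : IsCantorSet l₂ C₂) :
    {x : ℝ | ∃ c₁ ∈ C₁, ∃ c₂ ∈ C₂, x = c₂ - c₁} = Icc (-1 : ℝ) 1 := by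
  obtain ⟨hl₁0, hl₁2⟩ := hl₁
  obtain ⟨hl₂0, hl₂2⟩ := hl₂
  have hd₁ : 0 < 1 - 2*l₁ := by linarith
  have hd₂ : 0 < 1 - 2*l₂ := by linarith
  have K : (1-2*l₁)*(1-2*l₂) ≤ l₁*l₂ := by
    rw [div_mul_div_comm, le_div_iff₀ (by positivity)] at h
    linarith
  apply Subset.antisymm
  · rintro x ⟨c₁, hc₁, c₂, hc₂, rfl⟩
    have h1 := hC₁.2.2.1 hc₁
    have h2 := hC₂.2.2.1 hc₂
    exact ⟨by linarith [h1.1, h1.2, h2.1, h2.2], by linarith [h1.1, h1.2, h2.1, h2.2]⟩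
  · rintro t ⟨ht1, ht2⟩
    exact CantorDiff.main hl₁0 hl₁2 hl₂0 hl₂2 K hC₁ hC₂ ht1 ht2
end

section
/- The sliced maximal operator N_p defined by N_p f(x) = sup_{u ∈ 𝕊^{d−1}} ( (1/δ) ∫_{S^δ(0)} |f(x+u+y)|^p d(y,z) )^{1/p} is bounded on L^p(ℝ^d) with operator norm bounded uniformly in δ ∈ (0,1/2), for every 1 ≤ p < ∞. -/
open MeasureTheory Metric
open scoped ENNReal NNReal

noncomputable section

/-- First ℝ^d-component of a vector in ℝ^{2d}. -/
def fstPart {d : ℕ} (w : EuclideanSpace ℝ (Fin d ⊕ Fin d)) : EuclideanSpace ℝ (Fin d) :=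
  WithLp.toLp 2 (fun i => w (Sum.inl i))

/-- The δ-neighborhood S^δ(0) of the unit sphere in ℝ^{2d}. -/
def annulus2 (d : ℕ) (δ : ℝ) : Set (EuclideanSpace ℝ (Fin d ⊕ Fin d)) :=
  {w | 1 - δ < ‖w‖ ∧ ‖w‖ < 1 + δ}

/-- The sliced maximal operator
`N_p f(x) = sup_{u ∈ 𝕊^{d−1}} ((1/δ) ∫_{S^δ(0)} |f(x+u+y)|^p d(y,z))^{1/p}`. -/
def slicedMax {d : ℕ} (δ : ℝ) (p : ℝ) (f : EuclideanSpace ℝ (Fin d) → ℝ)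
    (x : EuclideanSpace ℝ (Fin d)) : ℝ≥0∞ :=
  ⨆ u ∈ sphere (0 : EuclideanSpace ℝ (Fin d)) 1,
    ((ENNReal.ofReal δ)⁻¹ *
      ∫⁻ w in annulus2 d δ, (‖f (x + u + fstPart w)‖₊ : ℝ≥0∞) ^ p) ^ (1 / p)

/-!
Write `ℝ^{2d} = ℝ^d × ℝ^d`. By Fubini, the inner integral of `N_p f(x)^p` equals
`∫ |f(x + u + y)|^p |S_y| dy`, where `S_y` is the slice of `S^δ(0)` above `y`.
For `d ≥ 2` every slice is a shell of measure `O(δ)` and is empty unless `|y| < 2`, so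
`N_p f(x)^p ≲ ∫_{|v| < 3} |f(x + v)|^p dv` uniformly in `u`; integrating in `x` and using
translation invariance gives the bound. For `d = 1` the slices near `|y| = 1` have measure of
order `√δ`, but the sphere is `{±1}`: the supremum is at most a sum of two terms, each of which
integrates to `|S^δ(0)| / δ · ‖f‖_p^p = O(‖f‖_p^p)`.
-/

theorem pow_sub_pow_le_mul_sq_sub_sq {a b : ℝ} {n : ℕ} (hn : 2 ≤ n) (hb : 0 ≤ b) (hba : b ≤ a)
    (ha : a ≤ 2) : a ^ n - b ^ n ≤ n * 2 ^ (n - 2) * (a ^ 2 - b ^ 2) := by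
  obtain ⟨k, rfl⟩ := Nat.exists_eq_add_of_le' hn
  have ha0 : 0 ≤ a := hb.trans hba
  have hmvt : a ^ (k + 2) - b ^ (k + 2) ≤ (a - b) * (k + 2 : ℕ) * a ^ (k + 1) := by
    simpa [abs_of_nonneg ha0, abs_of_nonneg hb, abs_of_nonneg (sub_nonneg.2 hba), hba]
      using (le_abs_self _).trans (abs_pow_sub_pow_le a b (k + 2))
  calc a ^ (k + 2) - b ^ (k + 2) ≤ (a - b) * (k + 2 : ℕ) * a ^ (k + 1) := hmvt
    _ = (k + 2 : ℕ) * a ^ k * (a * (a - b)) := by ring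
    _ ≤ (k + 2 : ℕ) * 2 ^ k * (a ^ 2 - b ^ 2) := by
      gcongr
      nlinarith
    _ = _ := by simp

theorem addHaar_ball_diff_ball {E : Type*} [NormedAddCommGroup E] [NormedSpace ℝ E]
    [MeasurableSpace E] [BorelSpace E] [FiniteDimensional ℝ E] [Nontrivial E]
    (μ : Measure E) [μ.IsAddHaarMeasure] {r R : ℝ} (hr : 0 ≤ r) (hrR : r ≤ R) :
    μ (ball 0 R \ ball 0 r) =
      ENNReal.ofReal (R ^ Module.finrank ℝ E - r ^ Module.finrank ℝ E) * μ (ball 0 1) := by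
  rw [measure_sdiff (ball_subset_ball hrR) measurableSet_ball.nullMeasurableSet
      measure_ball_lt_top.ne, μ.addHaar_ball _ (hr.trans hrR), μ.addHaar_ball _ hr,
    ← ENNReal.sub_mul fun _ _ => measure_ball_lt_top.ne,
    ← ENNReal.ofReal_sub _ (by positivity)]

theorem lintegral_lintegral_add_comp {G β : Type*} [MeasurableSpace G] [AddGroup G]
    [MeasurableAdd₂ G] [MeasurableSpace β] (μ : Measure G) [SFinite μ] [μ.IsAddRightInvariant]
    (ν : Measure β) [SFinite ν] {h : G → ℝ≥0∞} (hh : Measurable h) {T : β → G}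
    (hT : Measurable T) :
    ∫⁻ x, ∫⁻ w, h (x + T w) ∂ν ∂μ = ν Set.univ * ∫⁻ z, h z ∂μ := by
  rw [lintegral_lintegral_swap (f := fun x w => h (x + T w))
    (hh.comp (measurable_fst.add (hT.comp measurable_snd))).aemeasurable]
  simp_rw [lintegral_add_right_eq_self (μ := μ) h]
  rw [lintegral_const, mul_comm]

theorem setLIntegral_prod_comp_fst {α β : Type*} [MeasurableSpace α] [MeasurableSpace β]
    (μ : Measure α) [SFinite μ] (ν : Measure β) [SFinite ν] {S : Set (α × β)}
    (hS : MeasurableSet S) {g : α → ℝ≥0∞} (hg : Measurable g) :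
    ∫⁻ q in S, g q.1 ∂μ.prod ν = ∫⁻ y, g y * ν (Prod.mk y ⁻¹' S) ∂μ := by
  rw [← lintegral_indicator hS,
    lintegral_prod (S.indicator fun q => g q.1) ((hg.comp measurable_fst).indicator hS).aemeasurable]
  refine lintegral_congr fun y => ?_
  rw [← lintegral_indicator_const (measurable_prodMk_left hS)]
  exact lintegral_congr fun z => (Set.indicator_comp_right (Prod.mk y)).symm

theorem rpow_lintegral_le_mul_eLpNorm {α ε : Type*} [MeasurableSpace α] [ENorm ε]
    {μ : Measure α} {p : ℝ} (hp : 0 < p) {F : α → ℝ≥0∞} {f : α → ε} {L : ℝ≥0}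
    (h : ∫⁻ x, F x ^ p ∂μ ≤ L * ∫⁻ x, ‖f x‖ₑ ^ p ∂μ) :
    (∫⁻ x, F x ^ p ∂μ) ^ (1 / p) ≤ ↑(L ^ (1 / p)) * eLpNorm f (ENNReal.ofReal p) μ := by
  rw [eLpNorm_eq_lintegral_rpow_enorm_toReal (by simpa using hp) ENNReal.ofReal_ne_top,
    ENNReal.toReal_ofReal hp.le, ENNReal.coe_rpow_of_nonneg _ (by positivity),
    ← ENNReal.mul_rpow_of_nonneg _ _ (by positivity)]
  exact ENNReal.rpow_le_rpow h (by positivity)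

section

variable {d : ℕ}

def prodToSum (d : ℕ) (q : EuclideanSpace ℝ (Fin d) × EuclideanSpace ℝ (Fin d)) :
    EuclideanSpace ℝ (Fin d ⊕ Fin d) :=
  (PiLp.sumPiLpEquivProdLpPiLp (𝕜 := ℝ) 2 fun _ => ℝ).symm (WithLp.toLp 2 q)

theorem measurePreserving_prodToSum : MeasurePreserving (prodToSum d) :=
  (LinearIsometryEquiv.measurePreserving _).comp
    (WithLp.volume_preserving_symm_measurableEquiv_toLp_prod _ _).symm

@[simp]
theorem fstPart_prodToSum (q : EuclideanSpace ℝ (Fin d) × EuclideanSpace ℝ (Fin d)) :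
    fstPart (prodToSum d q) = q.1 := rfl

theorem norm_prodToSum_sq (q : EuclideanSpace ℝ (Fin d) × EuclideanSpace ℝ (Fin d)) :
    ‖prodToSum d q‖ ^ 2 = ‖q.1‖ ^ 2 + ‖q.2‖ ^ 2 := by
  rw [prodToSum, LinearIsometryEquiv.norm_map, WithLp.prod_norm_sq_eq_of_L2]
  rfl

@[fun_prop]
theorem measurable_fstPart : Measurable (fstPart (d := d)) := by
  unfold fstPart; fun_prop

theorem measurableSet_annulus2 (δ : ℝ) : MeasurableSet (annulus2 d δ) :=
  (isOpen_lt continuous_const continuous_norm).measurableSet.inter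
    (isOpen_lt continuous_norm continuous_const).measurableSet

def annulusSlice (d : ℕ) (δ : ℝ) (y : EuclideanSpace ℝ (Fin d)) : Set (EuclideanSpace ℝ (Fin d)) :=
  Prod.mk y ⁻¹' (prodToSum d ⁻¹' annulus2 d δ)

theorem setLIntegral_annulus2_comp_fstPart (δ : ℝ) {g : EuclideanSpace ℝ (Fin d) → ℝ≥0∞}
    (hg : Measurable g) :
    ∫⁻ w in annulus2 d δ, g (fstPart w) = ∫⁻ y, g y * volume (annulusSlice d δ y) := by
  rw [← measurePreserving_prodToSum.setLIntegral_comp_preimage (measurableSet_annulus2 δ)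
    (f := fun w => g (fstPart w)) (hg.comp measurable_fstPart)]
  simp only [fstPart_prodToSum]
  rw [Measure.volume_eq_prod]
  exact setLIntegral_prod_comp_fst _ _
    (measurePreserving_prodToSum.measurable (measurableSet_annulus2 δ)) hg

theorem annulusSlice_eq_empty {δ : ℝ} {y : EuclideanSpace ℝ (Fin d)} (hy : 1 + δ ≤ ‖y‖) :
    annulusSlice d δ y = ∅ := by
  refine Set.eq_empty_of_forall_notMem fun z ⟨_, hz⟩ => ?_
  have := norm_prodToSum_sq (y, z)
  nlinarith [norm_nonneg (prodToSum d (y, z)), norm_nonneg z]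

theorem annulusSlice_subset {δ : ℝ} (hδ : δ ≤ 1) (y : EuclideanSpace ℝ (Fin d)) :
    annulusSlice d δ y ⊆
      ball 0 √((1 + δ) ^ 2 - ‖y‖ ^ 2) \ ball 0 √((1 - δ) ^ 2 - ‖y‖ ^ 2) := by
  -- `√` of a negative number is `0`: for `‖y‖ ≥ 1 - δ` the inner ball is empty.
  rintro z ⟨hlow, hup⟩
  have hnorm := norm_prodToSum_sq (y, z)
  have hw := norm_nonneg (prodToSum d (y, z))
  refine ⟨?_, fun hb => ?_⟩
  · rw [mem_ball_zero_iff, Real.lt_sqrt (norm_nonneg z)]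
    nlinarith
  · rw [mem_ball_zero_iff, ← not_le, Real.sqrt_le_left (norm_nonneg z)] at hb
    nlinarith

theorem volume_annulusSlice_le (hd : 2 ≤ d) {δ : ℝ} (hδ₀ : 0 ≤ δ) (hδ₁ : δ ≤ 1)
    (y : EuclideanSpace ℝ (Fin d)) :
    volume (annulusSlice d δ y) ≤
      ENNReal.ofReal (d * 2 ^ d * δ) * volume (ball (0 : EuclideanSpace ℝ (Fin d)) 1) := by
  have : Nonempty (Fin d) := ⟨⟨0, by omega⟩⟩
  set a := √((1 + δ) ^ 2 - ‖y‖ ^ 2)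
  set b := √((1 - δ) ^ 2 - ‖y‖ ^ 2)
  have hb : 0 ≤ b := Real.sqrt_nonneg _
  have hba : b ≤ a := Real.sqrt_le_sqrt (by nlinarith)
  have ha : a ≤ 2 := (Real.sqrt_le_left zero_le_two).2 (by nlinarith [norm_nonneg y])
  have hsq : a ^ 2 ≤ b ^ 2 + 4 * δ := by
    simp only [a, b, Real.sq_sqrt']
    exact max_le (by nlinarith [le_max_left ((1 - δ) ^ 2 - ‖y‖ ^ 2) 0])
      (by linarith [le_max_right ((1 - δ) ^ 2 - ‖y‖ ^ 2) 0])
  have hpow : (2 : ℝ) ^ d = 2 ^ (d - 2) * 4 := by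
    rw [← pow_sub_mul_pow 2 hd]; norm_num
  calc volume (annulusSlice d δ y) ≤ volume (ball (0 : EuclideanSpace ℝ (Fin d)) a \ ball 0 b) :=
        measure_mono (annulusSlice_subset hδ₁ y)
    _ = ENNReal.ofReal (a ^ d - b ^ d) * volume (ball (0 : EuclideanSpace ℝ (Fin d)) 1) := by
        rw [addHaar_ball_diff_ball volume hb hba, finrank_euclideanSpace_fin]
    _ ≤ ENNReal.ofReal (d * 2 ^ d * δ) * volume (ball (0 : EuclideanSpace ℝ (Fin d)) 1) := by
        gcongr
        calc a ^ d - b ^ d ≤ d * 2 ^ (d - 2) * (a ^ 2 - b ^ 2) :=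
              pow_sub_pow_le_mul_sq_sub_sq hd hb hba ha
          _ ≤ d * 2 ^ (d - 2) * (4 * δ) := by gcongr; linarith
          _ = d * 2 ^ d * δ := by rw [hpow]; ring

theorem slicedMax_rpow_le {δ p : ℝ} (hp : 0 < p) {f : EuclideanSpace ℝ (Fin d) → ℝ}
    {x : EuclideanSpace ℝ (Fin d)} {M : ℝ≥0∞}
    (hM : ∀ u ∈ sphere (0 : EuclideanSpace ℝ (Fin d)) 1,
      (ENNReal.ofReal δ)⁻¹ * ∫⁻ w in annulus2 d δ, ‖f (x + u + fstPart w)‖ₑ ^ p ≤ M) :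
    slicedMax δ p f x ^ p ≤ M := by
  rw [← ENNReal.le_rpow_inv_iff hp]
  refine iSup₂_le fun u hu => ?_
  rw [one_div]
  exact ENNReal.rpow_le_rpow (hM u hu) (by positivity)

theorem slicedMax_rpow_le_setLIntegral_ball (hd : 2 ≤ d) {δ p : ℝ} (hp : 0 < p)
    (hδ₀ : 0 < δ) (hδ₁ : δ ≤ 1) {f : EuclideanSpace ℝ (Fin d) → ℝ} (hf : Measurable f)
    (x : EuclideanSpace ℝ (Fin d)) :
    slicedMax δ p f x ^ p ≤
      ENNReal.ofReal (d * 2 ^ d) * volume (ball (0 : EuclideanSpace ℝ (Fin d)) 1) *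
        ∫⁻ v in ball 0 3, ‖f (x + v)‖ₑ ^ p := by
  set K := ENNReal.ofReal (d * 2 ^ d) * volume (ball (0 : EuclideanSpace ℝ (Fin d)) 1)
  set G : EuclideanSpace ℝ (Fin d) → ℝ≥0∞ := fun v => ‖f (x + v)‖ₑ ^ p
  have hG : Measurable G := by fun_prop
  have hδ : ENNReal.ofReal δ ≠ 0 := (ENNReal.ofReal_pos.2 hδ₀).ne'
  have hslice (y : EuclideanSpace ℝ (Fin d)) :
      volume (annulusSlice d δ y) ≤ ENNReal.ofReal δ * K := by
    rw [← mul_assoc, ← ENNReal.ofReal_mul hδ₀.le, mul_comm δ]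
    exact volume_annulusSlice_le hd hδ₀.le hδ₁ y
  apply slicedMax_rpow_le hp
  intro u hu
  calc (ENNReal.ofReal δ)⁻¹ * ∫⁻ w in annulus2 d δ, ‖f (x + u + fstPart w)‖ₑ ^ p
      = (ENNReal.ofReal δ)⁻¹ * ∫⁻ y, G (u + y) * volume (annulusSlice d δ y) := by
        congr 1
        simpa only [G, Function.comp_def, add_assoc] using
          setLIntegral_annulus2_comp_fstPart δ (hG.comp (measurable_const_add u))
    _ = (ENNReal.ofReal δ)⁻¹ * ∫⁻ y in ball 0 2, G (u + y) * volume (annulusSlice d δ y) := by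
        rw [setLIntegral_eq_of_support_subset fun y hy => ?_]
        by_contra hy₂
        rw [mem_ball_zero_iff, not_lt] at hy₂
        simp [annulusSlice_eq_empty (by linarith : 1 + δ ≤ ‖y‖)] at hy
    _ ≤ (ENNReal.ofReal δ)⁻¹ * ∫⁻ y in ball 0 2, G (u + y) * (ENNReal.ofReal δ * K) := by
        gcongr with y
        exact hslice y
    _ = K * ∫⁻ y in ball 0 2, G (u + y) := by
        rw [lintegral_mul_const' _ _ (by finiteness), mul_left_comm,
          ENNReal.inv_mul_cancel_left hδ ENNReal.ofReal_ne_top, mul_comm]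
    _ ≤ K * ∫⁻ v in ball 0 3, G v := by
        rw [(measurePreserving_add_left volume u).setLIntegral_comp_emb
          (MeasurableEquiv.addLeft u).measurableEmbedding G (ball 0 2)]
        refine mul_le_mul_right (lintegral_mono_set ?_) K
        rintro _ ⟨y, hy, rfl⟩
        rw [mem_ball_zero_iff] at hy ⊢
        calc ‖u + y‖ ≤ ‖u‖ + ‖y‖ := norm_add_le u y
          _ < 3 := by rw [mem_sphere_zero_iff_norm.1 hu]; linarith

theorem lintegral_slicedMax_rpow_le_of_two_le (hd : 2 ≤ d) {δ p : ℝ} (hp : 0 < p)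
    (hδ₀ : 0 < δ) (hδ₁ : δ ≤ 1) {f : EuclideanSpace ℝ (Fin d) → ℝ} (hf : Measurable f) :
    ∫⁻ x, slicedMax δ p f x ^ p ≤
      ENNReal.ofReal (d * 2 ^ d) * volume (ball (0 : EuclideanSpace ℝ (Fin d)) 1) *
        volume (ball (0 : EuclideanSpace ℝ (Fin d)) 3) * ∫⁻ x, ‖f x‖ₑ ^ p :=
  calc ∫⁻ x, slicedMax δ p f x ^ p
      ≤ ∫⁻ x, ENNReal.ofReal (d * 2 ^ d) * volume (ball (0 : EuclideanSpace ℝ (Fin d)) 1) *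
          ∫⁻ v in ball 0 3, ‖f (x + v)‖ₑ ^ p :=
        lintegral_mono (slicedMax_rpow_le_setLIntegral_ball hd hp hδ₀ hδ₁ hf)
    _ = _ := by
        rw [lintegral_const_mul' _ _ (by finiteness),
          lintegral_lintegral_add_comp volume _ (hf.enorm.pow_const p) measurable_id',
          Measure.restrict_apply_univ]
        ring

end

theorem eq_or_eq_neg_of_mem_sphere_fin_one {u : EuclideanSpace ℝ (Fin 1)}
    (hu : u ∈ sphere (0 : EuclideanSpace ℝ (Fin 1)) 1) :
    u = EuclideanSpace.single 0 1 ∨ u = -EuclideanSpace.single 0 1 := by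
  have : |u 0| = 1 := by
    simpa [EuclideanSpace.norm_eq, Real.sqrt_sq_eq_abs] using mem_sphere_zero_iff_norm.1 hu
  rcases abs_eq zero_le_one |>.1 this with h | h
  · left; ext i; fin_cases i; simp [h]
  · right; ext i; fin_cases i; simp [h]

theorem volume_annulus2_one_le {δ : ℝ} (hδ₀ : 0 ≤ δ) (hδ₁ : δ ≤ 1) :
    volume (annulus2 1 δ) ≤
      ENNReal.ofReal (4 * δ) * volume (ball (0 : EuclideanSpace ℝ (Fin 1 ⊕ Fin 1)) 1) :=
  calc volume (annulus2 1 δ)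
      ≤ volume (ball (0 : EuclideanSpace ℝ (Fin 1 ⊕ Fin 1)) (1 + δ) \ ball 0 (1 - δ)) :=
        measure_mono fun w ⟨hlow, hup⟩ => ⟨mem_ball_zero_iff.2 hup, fun h => by
          rw [mem_ball_zero_iff] at h; linarith⟩
    _ = _ := by
        rw [addHaar_ball_diff_ball volume (by linarith) (by linarith), finrank_euclideanSpace]
        congr 2
        simp
        ring

theorem lintegral_slicedMax_rpow_le_fin_one {δ p : ℝ} (hp : 0 < p) (hδ₀ : 0 < δ) (hδ₁ : δ ≤ 1)
    {f : EuclideanSpace ℝ (Fin 1) → ℝ} (hf : Measurable f) :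
    ∫⁻ x, slicedMax δ p f x ^ p ≤
      8 * volume (ball (0 : EuclideanSpace ℝ (Fin 1 ⊕ Fin 1)) 1) * ∫⁻ x, ‖f x‖ₑ ^ p := by
  set c := volume (ball (0 : EuclideanSpace ℝ (Fin 1 ⊕ Fin 1)) 1)
  set e : EuclideanSpace ℝ (Fin 1) := EuclideanSpace.single 0 1
  set A : EuclideanSpace ℝ (Fin 1) → EuclideanSpace ℝ (Fin 1) → ℝ≥0∞ := fun u x =>
    ∫⁻ w in annulus2 1 δ, ‖f (x + u + fstPart w)‖ₑ ^ p
  have hA_meas (u) : Measurable (A u) :=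
    Measurable.lintegral_prod_right' (f := fun q => ‖f (q.1 + u + fstPart q.2)‖ₑ ^ p)
      (by fun_prop)
  have hA_int (u) : ∫⁻ x, A u x = volume (annulus2 1 δ) * ∫⁻ x, ‖f x‖ₑ ^ p := by
    simp only [A, add_assoc]
    rw [lintegral_lintegral_add_comp volume _ (hf.enorm.pow_const p)
      (measurable_fstPart.const_add u), Measure.restrict_apply_univ]
  have hpointwise (x) : slicedMax δ p f x ^ p ≤ (ENNReal.ofReal δ)⁻¹ * (A e x + A (-e) x) :=
    slicedMax_rpow_le hp fun u hu => by
      rcases eq_or_eq_neg_of_mem_sphere_fin_one hu with rfl | rfl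
      · exact mul_le_mul_right le_self_add _
      · exact mul_le_mul_right le_add_self _
  calc ∫⁻ x, slicedMax δ p f x ^ p
      ≤ ∫⁻ x, (ENNReal.ofReal δ)⁻¹ * (A e x + A (-e) x) := lintegral_mono hpointwise
    _ = (ENNReal.ofReal δ)⁻¹ * (2 * volume (annulus2 1 δ)) * ∫⁻ x, ‖f x‖ₑ ^ p := by
        rw [lintegral_const_mul' _ _ (by finiteness), lintegral_add_left (hA_meas e), hA_int,
          hA_int]
        ring
    _ ≤ (ENNReal.ofReal δ)⁻¹ * (2 * (ENNReal.ofReal (4 * δ) * c)) * ∫⁻ x, ‖f x‖ₑ ^ p := by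
        gcongr
        exact volume_annulus2_one_le hδ₀.le hδ₁
    _ = 8 * c * ∫⁻ x, ‖f x‖ₑ ^ p := by
        rw [ENNReal.ofReal_mul zero_le_four, ENNReal.ofReal_ofNat,
          show (2 : ℝ≥0∞) * (4 * ENNReal.ofReal δ * c) = ENNReal.ofReal δ * (8 * c) by ring,
          ENNReal.inv_mul_cancel_left (ENNReal.ofReal_pos.2 hδ₀).ne' ENNReal.ofReal_ne_top]

theorem stmt_8 {d : ℕ} (hd : 1 ≤ d) (p : ℝ) (hp : 1 ≤ p) :
    ∃ C : ℝ≥0, 0 < C ∧ ∀ δ : ℝ, 0 < δ → δ < 1 / 2 →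
      ∀ f : EuclideanSpace ℝ (Fin d) → ℝ, Measurable f →
        (∫⁻ x, slicedMax δ p f x ^ p) ^ (1 / p)
          ≤ C * eLpNorm f (ENNReal.ofReal p) volume := by
  have hp₀ : 0 < p := by linarith
  obtain ⟨L, hL⟩ : ∃ L : ℝ≥0, ∀ δ : ℝ, 0 < δ → δ < 1 / 2 →
      ∀ f : EuclideanSpace ℝ (Fin d) → ℝ, Measurable f →
        ∫⁻ x, slicedMax δ p f x ^ p ≤ L * ∫⁻ x, ‖f x‖ₑ ^ p := by
    rcases (by omega : d = 1 ∨ 2 ≤ d) with rfl | hd₂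
    · refine ⟨(8 * volume (ball (0 : EuclideanSpace ℝ (Fin 1 ⊕ Fin 1)) 1)).toNNReal,
        fun δ hδ₀ hδ₁ f hf => ?_⟩
      rw [ENNReal.coe_toNNReal (by finiteness)]
      exact lintegral_slicedMax_rpow_le_fin_one hp₀ hδ₀ (by linarith) hf
    · refine ⟨(ENNReal.ofReal (d * 2 ^ d) * volume (ball (0 : EuclideanSpace ℝ (Fin d)) 1) *
        volume (ball (0 : EuclideanSpace ℝ (Fin d)) 3)).toNNReal, fun δ hδ₀ hδ₁ f hf => ?_⟩
      rw [ENNReal.coe_toNNReal (by finiteness)]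
      exact lintegral_slicedMax_rpow_le_of_two_le hd₂ hp₀ hδ₀ (by linarith) hf
  refine ⟨(L + 1) ^ (1 / p), by positivity, fun δ hδ₀ hδ₁ f hf => ?_⟩
  refine rpow_lintegral_le_mul_eLpNorm hp₀ ((hL δ hδ₀ hδ₁ f hf).trans ?_)
  gcongr
  exact le_self_add
end
end
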